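/- The family T with the list operations is the free model of the parameterized theory of nondeterminism with once on generators A: for every model Y (i.e., a family Y : ℕ → Type with operations orY, failY, onceY, closeY satisfying the listed equations) and every function f : A → Y 0, there exists a unique family of functions h : ∀ n, T n → Y n such that h 0 [a] = f a for all a : A, and h is a homomorphism: h n (xs ++ ys) = orY n (h n xs) (h n ys); h n [] = failY n; h (n+1) [x] = closeY n (h n x); and h n (onceT n l) = onceY n (h (n+1) l). -/
import Mathlib


namespace Stmt1

/-- Auxiliary: `U A n = List^n A`. -/
abbrev U (A : Type) : ℕ → Type
  | 0 => A
  | n + 1 => List (U A n)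

/-- `T A n = List^(n+1) A`: `T A 0 = List A` and `T A (n+1) = List (T A n)`. -/
abbrev T (A : Type) (n : ℕ) : Type := List (U A n)

/-- Choice is list concatenation. -/
def orT (A : Type) (n : ℕ) (x y : T A n) : T A n := x ++ y

/-- Failure is the empty list. -/
def failT (A : Type) (n : ℕ) : T A n := []

/-- Closing a scope wraps its continuation as a singleton list. -/
def closeT (A : Type) (n : ℕ) (x : T A n) : T A (n + 1) := [x]

/-- `once` takes the head of the list (or fails on the empty list). -/
def onceT (A : Type) (n : ℕ) : T A (n + 1) → T A n
  | [] => failT A n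
  | x :: _ => x


section Aux
variable {A : Type} {Y : ℕ → Type}

/-- Interpretation of generators `U A n` in a model `Y`. -/
def gel (f : A → Y 0) (orY : ∀ n, Y n → Y n → Y n) (failY : ∀ n, Y n)
    (closeY : ∀ n, Y n → Y (n + 1)) : ∀ n, U A n → Y n
  | 0, a => f a
  | n + 1, x => closeY n
      (x.foldr (fun u acc => orY n (gel f orY failY closeY n u) acc) (failY n))

/-- Interpretation of `T A n` in a model. -/
def hdef (f : A → Y 0) (orY : ∀ n, Y n → Y n → Y n) (failY : ∀ n, Y n)
    (closeY : ∀ n, Y n → Y (n + 1)) (n : ℕ) (l : T A n) : Y n :=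
  l.foldr (fun u acc => orY n (gel f orY failY closeY n u) acc) (failY n)

end Aux

/-- `T` is the free model of the parameterized theory of nondeterminism
with `once` on generators `A`. -/
theorem stmt_1 (A : Type) (Y : ℕ → Type)
    (orY : ∀ n, Y n → Y n → Y n) (failY : ∀ n, Y n)
    (onceY : ∀ n, Y (n + 1) → Y n) (closeY : ∀ n, Y n → Y (n + 1))
    (or_assoc : ∀ n (x y z : Y n), orY n (orY n x y) z = orY n x (orY n y z))
    (or_fail_right : ∀ n (x : Y n), orY n x (failY n) = x)
    (or_fail_left : ∀ n (x : Y n), orY n (failY n) x = x)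
    (once_fail : ∀ n, onceY n (failY (n + 1)) = failY n)
    (once_or_idem : ∀ n (y : Y (n + 1)), onceY n (orY (n + 1) y y) = onceY n y)
    (once_close : ∀ n (x : Y n), onceY n (closeY n x) = x)
    (once_or_close : ∀ n (x : Y n) (y : Y (n + 1)),
      onceY n (orY (n + 1) (closeY n x) y) = x)
    (f : A → Y 0) :
    ∃! h : ∀ n, T A n → Y n,
      (∀ a : A, h 0 [a] = f a) ∧
      (∀ n (xs ys : T A n), h n (xs ++ ys) = orY n (h n xs) (h n ys)) ∧
      (∀ n, h n ([] : T A n) = failY n) ∧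
      (∀ n (x : T A n), h (n + 1) [x] = closeY n (h n x)) ∧
      (∀ n (l : T A (n + 1)), h n (onceT A n l) = onceY n (h (n + 1) l)) := by
  set h := hdef f orY failY closeY with hh
  have hnil : ∀ n, h n ([] : T A n) = failY n := fun n => rfl
  have hcons : ∀ n (u : U A n) (xs : T A n),
      h n (u :: xs) = orY n (gel f orY failY closeY n u) (h n xs) := fun n u xs => rfl
  have happ : ∀ n (xs ys : T A n), h n (xs ++ ys) = orY n (h n xs) (h n ys) := by
    intro n xs ys
    induction xs with
    | nil => simp [hnil, or_fail_left]
    | cons u xs ih => simp [hcons, ih, or_assoc]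
  have hsingle : ∀ n (u : U A n), h n [u] = gel f orY failY closeY n u := by
    intro n u
    rw [hcons, hnil, or_fail_right]
  have hclose : ∀ n (x : T A n), h (n + 1) [x] = closeY n (h n x) := by
    intro n x
    rw [hsingle]; rfl
  refine ⟨h, ⟨?_, happ, hnil, hclose, ?_⟩, ?_⟩
  · intro a; rw [hsingle]; rfl
  · intro n l
    cases l with
    | nil =>
        show h n ([] : T A n) = _
        rw [hnil, hnil, once_fail]
    | cons x xs =>
        show h n x = _
        rw [hcons, ← hsingle, hclose, once_or_close]
  · intro h' ⟨hg', happ', hnil', hclose', _⟩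
    have key : ∀ n (l : T A n), h' n l = h n l := by
      intro n
      induction n with
      | zero =>
          intro l
          induction l with
          | nil => rw [hnil', hnil]
          | cons u xs ih =>
              have : (u :: xs : T A 0) = [u] ++ xs := rfl
              rw [this, happ', happ, ih, hg', hsingle]; rfl
      | succ n ihn =>
          intro l
          induction l with
          | nil => rw [hnil', hnil]
          | cons u xs ih =>
              have : (u :: xs : T A (n + 1)) = [u] ++ xs := rfl
              rw [this, happ', happ, ih, hclose', hclose, ihn]
    funext n l
    exact key n l

end Stmt1
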